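/- Fix real numbers a < 0 < b, let L : ℝ → ℝ be convex and continuous on the closed interval [a,b], and let g : ℝ → ℝ be Lipschitz. For x ∈ ℝ and t > 0 define u(x,t) := min_{y ∈ [x − b·t, x − a·t]} ( t·L((x−y)/t) + g(y) ), and define H : ℝ → ℝ by H(v) := max_{p ∈ [a,b]} ( v·p − L(p) ). If u (as a function on ℝ × (0,∞)) is differentiable at a point (x₀, t₀) with t₀ > 0, then ∂_t u(x₀,t₀) + H( ∂_x u(x₀,t₀) ) = 0. -/

import Mathlib

/-!
Following a straight characteristic of any speed `p ∈ [a, b]` forward from `(x, t)` for time `s`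
raises `u` by at most `s L(p)`: the minimiser for `(x, t)` stays admissible, and convexity of `L`
bounds the cost of the new, averaged speed. Hence `p u_x + u_t ≤ L(p)` for all `p`, that is
`H(u_x) ≤ -u_t`. Following the optimal characteristic, whose speed `p₀` comes from a minimiser,
backward lowers `u` by at least `s L(p₀)`, so `p₀ u_x + u_t ≥ L(p₀)`: the maximum defining `H(u_x)`
is attained at `p₀` and equals `-u_t`.
-/

open Set Filter Topology

theorem HasFDerivAt.apply_le_of_eventually_add_smul_le {E : Type*} [NormedAddCommGroup E]
    [NormedSpace ℝ E] {F : E → ℝ} {F' : E →L[ℝ] ℝ} {z v : E} {c : ℝ} (hF : HasFDerivAt F F' z)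
    (hle : ∀ᶠ s in 𝓝[>] (0 : ℝ), F (z + s • v) ≤ F z + s * c) : F' v ≤ c := by
  have hline : HasDerivAt (fun s : ℝ => F (z + s • v)) (F' v) 0 := by
    have hpath : HasDerivAt (fun s : ℝ => z + s • v) v 0 := by
      simpa using ((hasDerivAt_id (0 : ℝ)).smul_const v).const_add z
    exact (by simpa using hF : HasFDerivAt F F' (z + (0 : ℝ) • v)).comp_hasDerivAt 0 hpath
  refine le_of_tendsto hline.tendsto_slope_zero_right ?_
  filter_upwards [hle, self_mem_nhdsWithin] with s hs (hpos : 0 < s)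
  rw [zero_add, zero_smul, add_zero, smul_eq_mul, inv_mul_le_iff₀ hpos]
  linarith

theorem ConvexOn.add_mul_apply_div_add_le {S : Set ℝ} {L : ℝ → ℝ} (hL : ConvexOn ℝ S L)
    {p q s t : ℝ} (hp : p ∈ S) (hq : q ∈ S) (hs : 0 ≤ s) (ht : 0 ≤ t) (hst : 0 < s + t) :
    (s + t) * L ((s * p + t * q) / (s + t)) ≤ s * L p + t * L q := by
  have h := hL.2 hp hq (div_nonneg hs hst.le) (div_nonneg ht hst.le) (by field_simp)
  simp only [smul_eq_mul] at h
  calc (s + t) * L ((s * p + t * q) / (s + t))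
      = (s + t) * L (s / (s + t) * p + t / (s + t) * q) := by congr 2; field_simp
    _ ≤ (s + t) * (s / (s + t) * L p + t / (s + t) * L q) := by gcongr
    _ = s * L p + t * L q := by field_simp

noncomputable def hopfLax (a b : ℝ) (L g : ℝ → ℝ) (x t : ℝ) : ℝ :=
  sInf ((fun y => t * L ((x - y) / t) + g y) '' Icc (x - b * t) (x - a * t))

section HopfLax

variable {a b : ℝ} {L g : ℝ → ℝ} {x t : ℝ}

theorem hopfLax_eq_sInf_velocity (ht : 0 < t) :
    hopfLax a b L g x t = sInf ((fun p => t * L p + g (x - t * p)) '' Icc a b) := by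
  refine congrArg sInf ?_
  ext c
  constructor
  · rintro ⟨y, ⟨hy₁, hy₂⟩, rfl⟩
    refine ⟨(x - y) / t, ⟨?_, ?_⟩, ?_⟩
    · rw [le_div_iff₀ ht]; linarith
    · rw [div_le_iff₀ ht]; linarith
    · simp only [mul_div_cancel₀ _ ht.ne', sub_sub_cancel]
  · rintro ⟨p, ⟨hp₁, hp₂⟩, rfl⟩
    refine ⟨x - t * p, ⟨by nlinarith, by nlinarith⟩, ?_⟩
    simp only [sub_sub_cancel, mul_div_cancel_left₀ _ ht.ne']

theorem isLeast_hopfLax (hab : a ≤ b) (hL : ContinuousOn L (Icc a b)) (hg : Continuous g)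
    (ht : 0 < t) :
    IsLeast ((fun p => t * L p + g (x - t * p)) '' Icc a b) (hopfLax a b L g x t) := by
  have hcont : ContinuousOn (fun p => t * L p + g (x - t * p)) (Icc a b) :=
    (continuousOn_const.mul hL).add (hg.comp (by fun_prop)).continuousOn
  obtain ⟨m, hm⟩ :=
    (isCompact_Icc.image_of_continuousOn hcont).exists_isLeast ((nonempty_Icc.2 hab).image _)
  rwa [hopfLax_eq_sInf_velocity ht, hm.csInf_eq]

theorem hopfLax_add_le (hab : a ≤ b) (hLconv : ConvexOn ℝ (Icc a b) L)
    (hL : ContinuousOn L (Icc a b)) (hg : Continuous g) (ht : 0 < t) {p s : ℝ}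
    (hp : p ∈ Icc a b) (hs : 0 ≤ s) :
    hopfLax a b L g (x + s * p) (t + s) ≤ hopfLax a b L g x t + s * L p := by
  obtain ⟨⟨p₀, hp₀, hmin⟩, -⟩ := isLeast_hopfLax (x := x) hab hL hg ht
  have hst : 0 < s + t := by linarith
  set q := (s * p + t * p₀) / (s + t)
  have hq : q ∈ Icc a b := by
    convert hLconv.1 hp hp₀ (div_nonneg hs hst.le) (div_nonneg ht.le hst.le) (by field_simp)
      using 1
    simp only [smul_eq_mul, q]; field_simp
  have hfoot : x + s * p - (t + s) * q = x - t * p₀ := by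
    simp only [q, add_comm t s]; field_simp; ring
  calc hopfLax a b L g (x + s * p) (t + s)
      ≤ (t + s) * L q + g (x + s * p - (t + s) * q) :=
        (isLeast_hopfLax hab hL hg (by linarith)).2 (mem_image_of_mem _ hq)
    _ ≤ s * L p + t * L p₀ + g (x - t * p₀) := by
        rw [hfoot, add_comm t s]
        gcongr
        exact hLconv.add_mul_apply_div_add_le hp hp₀ hs ht.le hst
    _ = hopfLax a b L g x t + s * L p := by rw [← hmin]; ring

theorem exists_hopfLax_sub_le (hab : a ≤ b) (hL : ContinuousOn L (Icc a b)) (hg : Continuous g)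
    (ht : 0 < t) : ∃ p ∈ Icc a b, ∀ s < t,
      hopfLax a b L g (x - s * p) (t - s) ≤ hopfLax a b L g x t - s * L p := by
  obtain ⟨⟨p, hp, hmin⟩, -⟩ := isLeast_hopfLax (x := x) hab hL hg ht
  refine ⟨p, hp, fun s hs => ?_⟩
  calc hopfLax a b L g (x - s * p) (t - s)
      ≤ (t - s) * L p + g (x - s * p - (t - s) * p) :=
        (isLeast_hopfLax hab hL hg (by linarith)).2 (mem_image_of_mem _ hp)
    _ = hopfLax a b L g x t - s * L p := by rw [← hmin]; ring_nf

end HopfLax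

/-- Theorem 3.6 (Theorem 5): the Hopf–Lax function satisfies the Hamilton–Jacobi
equation `u_t + H(u_x) = 0` at every point of (total) differentiability, where
`H(v) = max_{p ∈ [a,b]} (v p - L(p))` is the polygonal flux. -/
theorem stmt8 (a b : ℝ) (ha : a < 0) (hb : 0 < b) (L : ℝ → ℝ)
    (hLconv : ConvexOn ℝ (Set.Icc a b) L) (hLcont : ContinuousOn L (Set.Icc a b))
    (g : ℝ → ℝ) (hg : ∃ K : NNReal, LipschitzWith K g) :
    let u : ℝ → ℝ → ℝ := fun x t =>
      sInf ((fun y => t * L ((x - y) / t) + g y) '' Set.Icc (x - b * t) (x - a * t))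
    let H : ℝ → ℝ := fun v => sSup ((fun p => v * p - L p) '' Set.Icc a b)
    let U : ℝ × ℝ → ℝ := fun q => u q.1 q.2
    ∀ x₀ t₀ : ℝ, 0 < t₀ → DifferentiableAt ℝ U (x₀, t₀) →
      fderiv ℝ U (x₀, t₀) (0, 1) + H (fderiv ℝ U (x₀, t₀) (1, 0)) = 0 := by
  intro u H U x₀ t₀ ht₀ hdiff
  have hab : a ≤ b := (ha.trans hb).le
  have hgc : Continuous g := hg.elim fun _ hK => hK.continuous
  set f := fderiv ℝ U (x₀, t₀)
  have hU : HasFDerivAt (fun q : ℝ × ℝ => hopfLax a b L g q.1 q.2) f (x₀, t₀) :=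
    hdiff.hasFDerivAt
  have hf : ∀ p, f (p, 1) = f (1, 0) * p + f (0, 1) := fun p => by
    rw [show ((p, 1) : ℝ × ℝ) = p • (1, 0) + (0, 1) by simp, map_add, map_smul, smul_eq_mul,
      mul_comm]
  have hsub : ∀ p ∈ Icc a b, f (1, 0) * p - L p ≤ -f (0, 1) := fun p hp => by
    have := hU.apply_le_of_eventually_add_smul_le (v := (p, 1)) (c := L p) <|
      eventually_mem_nhdsWithin.mono fun s (hs : 0 < s) => by
        simpa [mul_comm] using hopfLax_add_le (x := x₀) hab hLconv hLcont hgc ht₀ hp hs.le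
    linarith [hf p]
  obtain ⟨p₀, hp₀, hback⟩ := exists_hopfLax_sub_le (x := x₀) hab hLcont hgc ht₀
  have hsup : L p₀ ≤ f (p₀, 1) := by
    have := hU.apply_le_of_eventually_add_smul_le (v := -(p₀, 1)) (c := -L p₀) <|
      Filter.mem_of_superset (Ioo_mem_nhdsGT ht₀) fun s hs => by
        simpa [sub_eq_add_neg, mul_comm] using hback s hs.2
    rw [map_neg] at this
    linarith
  have hmax : IsGreatest ((fun p => f (1, 0) * p - L p) '' Icc a b) (-f (0, 1)) :=
    ⟨⟨p₀, hp₀, (hsub p₀ hp₀).antisymm (by linarith [hf p₀])⟩, forall_mem_image.2 hsub⟩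
  change f (0, 1) + sSup _ = 0
  rw [hmax.csSup_eq, add_neg_cancel]
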